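/- Let Γ be a connected, locally finite, infinite graph such that Aut(Γ)\Γ is finite. Then Γ contains a bi-infinite geodesic. -/

import Mathlib

open Pointwise

universe u

namespace CFGroups

variable {V : Type u}

/-- The edge boundary of `C`: adjacent ordered pairs `(u,v)` with `u ∈ C`, `v ∉ C`.
These are in canonical bijection with the undirected edges of `δC`. -/
def edgeBoundary (G : SimpleGraph V) (C : Set V) : Set (V × V) :=
  {p : V × V | G.Adj p.1 p.2 ∧ p.1 ∈ C ∧ p.2 ∉ C}

/-- The vertex boundary `βC`: endpoints of edges of `δC`. -/
def vertexBoundary (G : SimpleGraph V) (C : Set V) : Set V :=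
  {u : V | ∃ v : V, G.Adj u v ∧ ((u ∈ C ∧ v ∉ C) ∨ (v ∈ C ∧ u ∉ C))}

/-- A cut: `C` and its complement are nonempty and connected, and `δC` is finite. -/
def IsCut (G : SimpleGraph V) (C : Set V) : Prop :=
  C.Nonempty ∧ Cᶜ.Nonempty ∧ (G.induce C).Connected ∧ (G.induce Cᶜ).Connected ∧
    (edgeBoundary G C).Finite

/-- The weight `|δC|` of a cut. -/
noncomputable def weight (G : SimpleGraph V) (C : Set V) : ℕ :=
  (edgeBoundary G C).ncard

/-- A `k`-cut: a cut of weight at most `k`. -/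
def IsCutLe (G : SimpleGraph V) (k : ℕ) (C : Set V) : Prop :=
  IsCut G C ∧ weight G C ≤ k

/-- Two cuts are nested. -/
def Nested (C D : Set V) : Prop :=
  C ⊆ D ∨ C ⊆ Dᶜ ∨ Cᶜ ⊆ D ∨ Cᶜ ⊆ Dᶜ

/-- A bi-infinite simple path, as an injective `ℤ`-indexed sequence of successively
adjacent vertices. -/
def IsBiInfinitePath (G : SimpleGraph V) (α : ℤ → V) : Prop :=
  Function.Injective α ∧ ∀ i : ℤ, G.Adj (α i) (α (i + 1))

/-- A one-sided infinite simple path. -/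
def IsRayPath (G : SimpleGraph V) (γ : ℕ → V) : Prop :=
  Function.Injective γ ∧ ∀ i : ℕ, G.Adj (γ i) (γ (i + 1))

/-- `C(α)`: the cuts splitting the bi-infinite simple path `α` into two infinite pieces. -/
def cutsSplitting (G : SimpleGraph V) (α : ℤ → V) : Set (Set V) :=
  {C : Set V | IsCut G C ∧ (Set.range α ∩ C).Infinite ∧ (Set.range α ∩ Cᶜ).Infinite}

/-- `C_min(α)`: the cuts of minimal weight in `C(α)`. -/
def cutsMin (G : SimpleGraph V) (α : ℤ → V) : Set (Set V) :=
  {C ∈ cutsSplitting G α | ∀ D ∈ cutsSplitting G α, weight G C ≤ weight G D}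

/-- `Γ` is accessible with constant `k`: every bi-infinite simple path with `C(α) ≠ ∅`
admits a `k`-cut in `C(α)`. -/
def AccessibleWith (G : SimpleGraph V) (k : ℕ) : Prop :=
  ∀ α : ℤ → V, IsBiInfinitePath G α → (cutsSplitting G α).Nonempty →
    ∃ C ∈ cutsSplitting G α, weight G C ≤ k

/-- An accessible graph. -/
def Accessible (G : SimpleGraph V) : Prop := ∃ k : ℕ, AccessibleWith G k

/-- `m(C)`: the number of `k`-cuts not nested with `C`. -/
noncomputable def mdeg (G : SimpleGraph V) (k : ℕ) (C : Set V) : ℕ :=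
  Set.ncard {D : Set V | IsCutLe G k D ∧ ¬ Nested C D}

/-- `C_opt(α)`: the cuts of `C_min(α)` minimizing `m`. -/
def cutsOpt (G : SimpleGraph V) (k : ℕ) (α : ℤ → V) : Set (Set V) :=
  {C ∈ cutsMin G α | ∀ D ∈ cutsMin G α, mdeg G k C ≤ mdeg G k D}

/-- `C_opt`: the optimally nested cuts. -/
def COpt (G : SimpleGraph V) (k : ℕ) : Set (Set V) :=
  {C : Set V | ∃ α : ℤ → V, IsBiInfinitePath G α ∧ C ∈ cutsOpt G k α}

/-- The relation `C ∼ D` on optimal cuts. -/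
def SimRel (G : SimpleGraph V) (k : ℕ) (C D : Set V) : Prop :=
  C = D ∨ (Cᶜ ⊂ D ∧ ∀ E ∈ COpt G k, Cᶜ ⊂ E → E ⊆ D → E = D)

/-- The equivalence class `[C]` of an optimal cut `C` under `∼`. -/
def cls (G : SimpleGraph V) (k : ℕ) (C : Set V) : Set (Set V) :=
  {D ∈ COpt G k | SimRel G k C D}

/-- The structure tree `T(C_opt)`: vertices are the classes `[C]`, `C ∈ C_opt`, and for each
`C ∈ C_opt` there is an edge joining `[C]` and `[C*]`. -/
def structureTree (G : SimpleGraph V) (k : ℕ) :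
    SimpleGraph {S : Set (Set V) // ∃ C ∈ COpt G k, S = cls G k C} where
  Adj X Y := X ≠ Y ∧ ∃ C ∈ COpt G k,
    (X.1 = cls G k C ∧ Y.1 = cls G k Cᶜ) ∨ (Y.1 = cls G k C ∧ X.1 = cls G k Cᶜ)
  symm := ⟨by
    rintro X Y ⟨hne, C, hC, h⟩
    exact ⟨hne.symm, C, hC, h.symm⟩⟩
  loopless := ⟨fun X h => h.1 rfl⟩

/-- A locally finite graph. -/
def LocallyFiniteGraph (G : SimpleGraph V) : Prop :=
  ∀ v : V, (G.neighborSet v).Finite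

/-- The `r`-th neighbourhood `N^r S` of a set of vertices. -/
def nbhd (G : SimpleGraph V) (r : ℕ) (S : Set V) : Set V :=
  {v : V | ∃ u ∈ S, G.dist v u ≤ r}

/-- The block `B[C] = ⋂_{D ∼ C} N^κ D` assigned to the vertex `[C]` of the structure tree. -/
def block (G : SimpleGraph V) (k κ : ℕ) (C : Set V) : Set V :=
  ⋂ D ∈ cls G k C, nbhd G κ D

/-- `Aut(Γ)\Γ` is finite: the automorphism group of `Γ` acts with finitely many
vertex orbits and finitely many edge orbits. -/
def AutFinOrbits (G : SimpleGraph V) : Prop :=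
  (Set.range fun v : V => Set.range fun φ : G ≃g G => φ v).Finite ∧
  (Set.range fun e : G.edgeSet => Set.range fun φ : G ≃g G => Sym2.map ⇑φ e.1).Finite

/-- A group `H` (equipped with an action on the vertices) acts on the graph `G`
by graph automorphisms. -/
def ActsOn (G : SimpleGraph V) (H : Type u) [Group H] [MulAction H V] : Prop :=
  ∀ (g : H) (u v : V), G.Adj u v ↔ G.Adj (g • u) (g • v)

/-- `G\Γ` is finite: finitely many vertex orbits and finitely many edge orbits. -/
def ActFinOrbits (G : SimpleGraph V) (H : Type u) [Group H] [MulAction H V] : Prop :=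
  (Set.range fun v : V => Set.range fun g : H => g • v).Finite ∧
  (Set.range fun e : G.edgeSet => Set.range fun g : H => Sym2.map (fun v => g • v) e.1).Finite

/-- The graph has more than one end: some finite vertex set can be removed so that at least
two infinite connected components remain. -/
def MoreThanOneEnd (G : SimpleGraph V) : Prop :=
  ∃ S : Set V, S.Finite ∧ ∃ K₁ K₂ : (G.induce Sᶜ).ConnectedComponent,
    K₁ ≠ K₂ ∧ K₁.supp.Infinite ∧ K₂.supp.Infinite

/-- The Cayley graph of a group w.r.t. a generating set `S` (edges labelled by `S ∪ S⁻¹`). -/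
def cayleyGraph (K : Type u) [Group K] (S : Set K) : SimpleGraph K where
  Adj g h := g ≠ h ∧ (g⁻¹ * h ∈ S ∨ h⁻¹ * g ∈ S)
  symm := ⟨by rintro g h ⟨hne, hs⟩; exact ⟨hne.symm, hs.symm⟩⟩
  loopless := ⟨fun g h => h.1 rfl⟩

/-- A finitely generated group all of whose Cayley graphs have at most one end. -/
def FGOneEnded (K : Type u) [Group K] : Prop :=
  Group.FG K ∧ ∀ S : Set K, S.Finite → Subgroup.closure S = ⊤ →
    ¬ MoreThanOneEnd (cayleyGraph K S)

/-- An accessible group: it acts on a tree with finitely many orbits, finite edge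
stabilizers, and all vertex stabilizers finitely generated with at most one end. -/
def GroupAccessible (K : Type u) [Group K] : Prop :=
  ∃ (T : Type u) (tr : SimpleGraph T) (φ : K →* Equiv.Perm T),
    tr.IsTree ∧
    (∀ (g : K) (u v : T), tr.Adj u v ↔ tr.Adj (φ g u) (φ g v)) ∧
    (Set.range fun t : T => Set.range fun g : K => φ g t).Finite ∧
    (Set.range fun e : tr.edgeSet => Set.range fun g : K => Sym2.map ⇑(φ g) e.1).Finite ∧
    (∀ e ∈ tr.edgeSet, {g : K | Sym2.map ⇑(φ g) e = e}.Finite) ∧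
    (∀ t : T, ∃ L : Subgroup K, (L : Set K) = {g : K | φ g t = t} ∧ FGOneEnded ↥L)

/-- A tree decomposition of `G`. -/
def IsTreeDecomp (G : SimpleGraph V) {T : Type u} (tr : SimpleGraph T) (X : T → Set V) : Prop :=
  tr.IsTree ∧ (∀ v : V, ∃ t : T, v ∈ X t) ∧
  (∀ u v : V, G.Adj u v → ∃ t : T, u ∈ X t ∧ v ∈ X t) ∧
  (∀ v : V, (tr.induce {t : T | v ∈ X t}).Connected)

/-- `G` has treewidth at most `w`. -/
def TreewidthAtMost (G : SimpleGraph V) (w : ℕ) : Prop :=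
  ∃ (T : Type u) (tr : SimpleGraph T) (X : T → Set V),
    IsTreeDecomp G tr X ∧ ∀ t : T, (X t).Finite ∧ (X t).ncard ≤ w + 1

/-- `G` has finite treewidth. -/
def FiniteTreewidth (G : SimpleGraph V) : Prop := ∃ w : ℕ, TreewidthAtMost G w

/-- Uniformly bounded vertex degrees. -/
def UnifBoundedDegree (G : SimpleGraph V) : Prop :=
  ∃ d : ℕ, ∀ v : V, (G.neighborSet v).Finite ∧ (G.neighborSet v).ncard ≤ d

/-- A class of groups (in universe `u`), as a property of groups. -/
def VirtuallyIn (𝒢 : (K : Type u) → [inst : Group K] → Prop) (K : Type u) [Group K] : Prop :=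
  ∃ L : Subgroup K, L.FiniteIndex ∧ 𝒢 ↥L

/-- `K` has a quasi-isometric section: for some monoid presentation `π : Σ* → K` with
finite alphabet there is a section `σ` of `π` with `σ(1) = ε` which is quasi-isometric
w.r.t. the tree metric on `Σ*`; `d(u,v) ≤ k` is expressed via a common prefix
decomposition `u = p u'`, `v = p v'` with `|u'| + |v'| ≤ k`. -/
def HasQIS (K : Type u) [Group K] : Prop :=
  ∃ (A : Type u) (_ : Finite A) (π : List A → K),
    (∀ u v : List A, π (u ++ v) = π u * π v) ∧ π [] = 1 ∧ Function.Surjective π ∧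
    ∃ (σ : K → List A) (k : ℕ), 1 ≤ k ∧ σ 1 = [] ∧ (∀ g : K, π (σ g) = g) ∧
      ∀ (g : K) (a : A), ∃ p u' v' : List A,
        σ g = p ++ u' ∧ σ (g * π [a]) = p ++ v' ∧ u'.length + v'.length ≤ k

/-- A context-free group: the word problem w.r.t. some surjective monoid presentation
over a finite alphabet is a context-free language. -/
def IsContextFreeGroup (K : Type u) [Group K] : Prop :=
  ∃ (A : Type u) (_ : Finite A) (π : List A → K),
    (∀ u v : List A, π (u ++ v) = π u * π v) ∧ π [] = 1 ∧ Function.Surjective π ∧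
    Language.IsContextFree ({w : List A | π w = 1} : Language A)

end CFGroups

/-!
Geodesic segments of every even length exist because balls are finite and the graph is infinite.
Moving each segment by an automorphism puts its midpoint into a fixed finite set of orbit
representatives, so for every `i` the `i`-th vertices of the segments range over a finite set.
A compactness (König) argument along an ultrafilter then makes every coordinate stabilise, and
the pointwise limit is a bi-infinite geodesic.
-/

open Filter Set

theorem Ultrafilter.exists_forall_eventually_eq {ι α β : Type*} (U : Ultrafilter ι)
    (f : ι → α → β) (h : ∀ a, ∃ s : Set β, s.Finite ∧ ∀ᶠ n in (U : Filter ι), f n a ∈ s) :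
    ∃ g : α → β, ∀ a, ∀ᶠ n in (U : Filter ι), f n a = g a := by
  choose s hs hf using h
  have hlim : ∀ a, ∃ b ∈ s a, ∀ᶠ n in (U : Filter ι), f n a = b := fun a =>
    (U.eventually_exists_mem_iff (hs a)).1 ((hf a).mono fun _ hn => ⟨_, hn, rfl⟩)
  choose g _ hg using hlim
  exact ⟨g, hg⟩

namespace SimpleGraph

variable {V V' : Type*} {G : SimpleGraph V} {G' : SimpleGraph V'}

theorem Walk.dist_getVert_getVert_of_length_eq_dist {u v : V} (p : G.Walk u v)
    (hp : p.length = G.dist u v) {i j : ℕ} (hij : i ≤ j) (hj : j ≤ p.length) :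
    G.dist (p.getVert i) (p.getVert j) = j - i := by
  have hsub : ((p.take j).drop i).IsSubwalk p := (isSubwalk_drop _ i).trans (p.isSubwalk_take j)
  have hlen := length_eq_dist_of_subwalk hp hsub
  rw [drop_length, take_length, take_getVert, min_eq_right hij, min_eq_left hj] at hlen
  exact hlen.symm

theorem Reachable.dist_map_le (f : G →g G') {u v : V} (h : G.Reachable u v) :
    G'.dist (f u) (f v) ≤ G.dist u v := by
  obtain ⟨p, hp⟩ := h.exists_walk_length_eq_dist
  simpa [hp] using dist_le (p.map f)

theorem Iso.dist_apply (φ : G ≃g G') (u v : V) : G'.dist (φ u) (φ v) = G.dist u v := by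
  by_cases h : G.Reachable u v
  · refine le_antisymm (h.dist_map_le φ.toHom) ?_
    simpa using (Iso.reachable_iff (φ := φ) |>.2 h).dist_map_le φ.symm.toHom
  · rw [dist_eq_zero_of_not_reachable h, dist_eq_zero_of_not_reachable (mt Iso.reachable_iff.1 h)]

theorem Connected.finite_setOf_dist_le (hconn : G.Connected)
    (hlf : ∀ v, (G.neighborSet v).Finite) (c : V) (r : ℕ) : {v | G.dist c v ≤ r}.Finite := by
  induction r with
  | zero => simp [hconn.dist_eq_zero_iff]
  | succ r ih =>
    refine (ih.biUnion fun w _ => (hlf w).insert w).subset fun v hv => ?_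
    obtain ⟨p, hp⟩ := hconn.exists_walk_length_eq_dist v c
    simp only [mem_iUnion, mem_ofPred_eq] at hv ⊢
    by_cases hnil : p.Nil
    · exact ⟨c, by simp, by simp [hnil.eq]⟩
    · refine ⟨p.snd, ?_, mem_insert_of_mem _ (p.adj_snd hnil).symm⟩
      have := dist_le p.tail
      have := p.length_tail_add_one hnil
      rw [dist_comm] at hv ⊢
      omega

theorem Connected.exists_dist_eq [Infinite V] (hconn : G.Connected)
    (hlf : ∀ v, (G.neighborSet v).Finite) (c : V) (n : ℕ) : ∃ v, G.dist c v = n := by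
  obtain ⟨w, hw⟩ := (hconn.finite_setOf_dist_le hlf c n).infinite_compl.nonempty
  obtain ⟨p, hp⟩ := hconn.exists_walk_length_eq_dist c w
  simp only [mem_compl_iff, mem_ofPred_eq, not_le] at hw
  refine ⟨p.getVert n, ?_⟩
  simpa using p.dist_getVert_getVert_of_length_eq_dist hp (Nat.zero_le n) (by omega)

def IsGeodesicOn (G : SimpleGraph V) (γ : ℤ → V) (s : Set ℤ) : Prop :=
  ∀ i ∈ s, ∀ j ∈ s, G.dist (γ i) (γ j) = (i - j).natAbs

theorem IsGeodesicOn.comp_add_const {γ : ℤ → V} {s : Set ℤ} (h : G.IsGeodesicOn γ s) (k : ℤ) :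
    G.IsGeodesicOn (fun i => γ (i + k)) ((· + k) ⁻¹' s) := fun i hi j hj => by
  simpa using h _ hi _ hj

theorem IsGeodesicOn.iso {γ : ℤ → V} {s : Set ℤ} (h : G.IsGeodesicOn γ s) (φ : G ≃g G') :
    G'.IsGeodesicOn (φ ∘ γ) s := fun i hi j hj => by
  simpa [φ.dist_apply] using h i hi j hj

theorem Walk.isGeodesicOn_getVert {u v : V} (p : G.Walk u v) (hp : p.length = G.dist u v) :
    G.IsGeodesicOn (fun i => p.getVert i.toNat) (Icc 0 p.length) := by
  intro i ⟨hi0, hi⟩ j ⟨hj0, hj⟩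
  rcases le_total i j with hij | hji
  · rw [p.dist_getVert_getVert_of_length_eq_dist hp (by omega) (by omega)]
    omega
  · rw [dist_comm, p.dist_getVert_getVert_of_length_eq_dist hp (by omega) (by omega)]
    omega

theorem Connected.exists_isGeodesicOn_Icc [Infinite V] (hconn : G.Connected)
    (hlf : ∀ v, (G.neighborSet v).Finite) (n : ℕ) :
    ∃ γ : ℤ → V, G.IsGeodesicOn γ (Icc (-n) n) := by
  obtain ⟨v, hv⟩ := hconn.exists_dist_eq hlf (Classical.arbitrary V) (2 * n)
  obtain ⟨p, hp⟩ := hconn.exists_walk_length_eq_dist (Classical.arbitrary V) v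
  have hIcc : (· + (n : ℤ)) ⁻¹' Icc 0 (p.length : ℤ) = Icc (-(n : ℤ)) n := by
    rw [preimage_add_const_Icc, hp, hv]
    push_cast
    ring_nf
  exact ⟨_, hIcc ▸ (p.isGeodesicOn_getVert hp).comp_add_const n⟩

theorem Connected.exists_isGeodesicOn_univ_of_isGeodesicOn_Icc (hconn : G.Connected)
    (hlf : ∀ v, (G.neighborSet v).Finite) {R : Set V} (hR : R.Finite) (γ : ℕ → ℤ → V)
    (hγ0 : ∀ n, γ n 0 ∈ R) (hγ : ∀ n : ℕ, G.IsGeodesicOn (γ n) (Icc (-(n : ℤ)) n)) :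
    ∃ α : ℤ → V, G.IsGeodesicOn α univ := by
  let U := hyperfilter ℕ
  have hlarge : ∀ i : ℤ, ∀ᶠ n : ℕ in (U : Filter ℕ), i ∈ Icc (-(n : ℤ)) n := fun i =>
    Nat.hyperfilter_le_atTop <| (eventually_ge_atTop i.natAbs).mono fun n hn => by
      constructor <;> omega
  have hbounded (i : ℤ) :
      ∀ᶠ n : ℕ in (U : Filter ℕ), γ n i ∈ ⋃ r ∈ R, {v | G.dist r v ≤ i.natAbs} :=
    (hlarge i).mono fun n hn => mem_biUnion (hγ0 n) (by simpa using (hγ n 0 (by simp) i hn).le)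
  obtain ⟨α, hα⟩ := U.exists_forall_eventually_eq γ fun i =>
    ⟨_, hR.biUnion fun r _ => hconn.finite_setOf_dist_le hlf r _, hbounded i⟩
  refine ⟨α, fun i _ j _ => ?_⟩
  obtain ⟨n, hi, hj, hin, hjn⟩ := ((hα i).and ((hα j).and ((hlarge i).and (hlarge j)))).exists
  rw [← hi, ← hj]
  exact hγ n i hin j hjn

theorem exists_finite_forall_exists_iso_apply_mem
    (h : (Set.range fun v : V => Set.range fun φ : G ≃g G => φ v).Finite) :
    ∃ R : Set V, R.Finite ∧ ∀ v, ∃ φ : G ≃g G, φ v ∈ R := by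
  let orbit : V → Set V := fun v => Set.range fun φ : G ≃g G => φ v
  have := h.to_subtype
  refine ⟨range fun O : range orbit => O.2.choose, finite_range _, fun v => ?_⟩
  let O : range orbit := ⟨orbit v, v, rfl⟩
  have hw : O.2.choose ∈ orbit O.2.choose := ⟨Iso.refl, rfl⟩
  rw [O.2.choose_spec] at hw
  obtain ⟨φ, hφ⟩ := hw
  exact ⟨φ, O, hφ.symm⟩

end SimpleGraph

open CFGroups Pointwise in
/-- A connected, locally finite, infinite graph with `Aut(Γ)\Γ` finite
contains a bi-infinite geodesic. -/
theorem exists_biinfinite_geodesic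
    {V : Type u} (G : SimpleGraph V) (hconn : G.Connected)
    (hlf : CFGroups.LocallyFiniteGraph G) (hinf : Infinite V)
    (horb : CFGroups.AutFinOrbits G) :
    ∃ α : ℤ → V, ∀ i j : ℤ, G.dist (α i) (α j) = (i - j).natAbs := by
  obtain ⟨R, hR, hrep⟩ := SimpleGraph.exists_finite_forall_exists_iso_apply_mem horb.1
  choose γ hγ using hconn.exists_isGeodesicOn_Icc hlf
  choose φ hφ using fun n => hrep (γ n 0)
  obtain ⟨α, hα⟩ := hconn.exists_isGeodesicOn_univ_of_isGeodesicOn_Icc hlf hR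
    (fun n => φ n ∘ γ n) hφ fun n => (hγ n).iso (φ n)
  exact ⟨α, fun i j => hα i trivial j trivial⟩
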